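/- In the tree type system, derivations are relevant: if Γ ⊢ t : A is derivable, then every variable in the domain of Γ (i.e., mapped to a non-empty tree type) occurs free in t. Consequently, if t is closed then Γ assigns the empty tree type to every variable. -/

import Mathlib

/-! # Tree intersection types -/

mutual
/-- Linear types: `A ::= ⋆ | T → A`. -/
inductive LinTy : Type where
  | star : LinTy
  | arr : TreeTy → LinTy → LinTy
/-- Generic types: linear types or tree types. -/
inductive GenTy : Type where
  | lin : LinTy → GenTy
  | tree : TreeTy → GenTy
/-- Tree types: finite sequences of generic types. -/
inductive TreeTy : Type where
  | node : List GenTy → TreeTy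
end

mutual
/-- Leaves of a generic type. -/
def GenTy.leaves : GenTy → List LinTy
  | .lin A => [A]
  | .tree T => TreeTy.leaves T
  termination_by g => sizeOf g
/-- Leaves extraction on tree types. -/
def TreeTy.leaves : TreeTy → List LinTy
  | .node gs => gs.attach.flatMap (fun g => GenTy.leaves g.1)
  termination_by T => sizeOf T
  decreasing_by simp_wf; have := List.sizeOf_lt_of_mem g.2; omega
end

/-- Concatenation `⊎` of tree types (sequences). -/
def TreeTy.cat : TreeTy → TreeTy → TreeTy
  | .node a, .node b => .node (a ++ b)

mutual
/-- Weight (size) of a linear type, with parameter `X`. -/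
def LinTy.weight (X : ℕ) : LinTy → ℕ
  | .star => 0
  | .arr T A => max (TreeTy.weight X T) (LinTy.weight X A + 1)
  termination_by A => sizeOf A
def GenTy.weight (X : ℕ) : GenTy → ℕ
  | .lin A => LinTy.weight X A
  | .tree T => TreeTy.weight X T
  termination_by g => sizeOf g
def TreeTy.weight (X : ℕ) : TreeTy → ℕ
  | .node gs => X + (gs.attach.map (fun g => GenTy.weight X g.1)).foldr max 0
  termination_by T => sizeOf T
  decreasing_by simp_wf; have := List.sizeOf_lt_of_mem g.2; omega
end

mutual
/-- Hereditary absence of empty sequences (every leaf context ends in `⋆`). -/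
inductive LinTy.Good : LinTy → Prop where
  | star : LinTy.Good .star
  | arr {T A} : TreeTy.Good T → LinTy.Good A → LinTy.Good (.arr T A)
inductive GenTy.Good : GenTy → Prop where
  | lin {A} : LinTy.Good A → GenTy.Good (.lin A)
  | tree {T} : TreeTy.Good T → GenTy.Good (.tree T)
inductive TreeTy.Good : TreeTy → Prop where
  | node {gs : List GenTy} : gs ≠ [] → (∀ g ∈ gs, GenTy.Good g) → TreeTy.Good (.node gs)
end

/-! ## Leaf contexts -/

/-- One-hole contexts into tree types whose hole sits at a leaf position. -/
inductive LeafCtx : Type where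
  | here (l r : List GenTy) : LeafCtx
  | deeper (l : List GenTy) (L : LeafCtx) (r : List GenTy) : LeafCtx

/-- Plugging a linear type into a leaf context. -/
def LeafCtx.plug : LeafCtx → LinTy → TreeTy
  | .here l r, A => .node (l ++ .lin A :: r)
  | .deeper l L r, A => .node (l ++ .tree (L.plug A) :: r)

/-- Number of leaves strictly to the left of the hole. -/
def LeafCtx.holeIdx : LeafCtx → ℕ
  | .here l _ => (TreeTy.node l).leaves.length
  | .deeper l L _ => (TreeTy.node l).leaves.length + L.holeIdx

/-! ## Type contexts -/

mutual
/-- Linear type contexts: `𝕃c ::= ⟨·⟩ | T → 𝕃c | 𝕋 → A`. -/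
inductive LinCtx : Type where
  | hole : LinCtx
  | arrR : TreeTy → LinCtx → LinCtx
  | arrL : TreeCtx → LinTy → LinCtx
/-- Tree type contexts. -/
inductive TreeCtx : Type where
  | node : List GenTy → GenCtx → List GenTy → TreeCtx
/-- Generic type contexts. -/
inductive GenCtx : Type where
  | lin : LinCtx → GenCtx
  | tree : TreeCtx → GenCtx
end

mutual
def LinCtx.plug : LinCtx → LinTy → LinTy
  | .hole, B => B
  | .arrR T C, B => .arr T (C.plug B)
  | .arrL C A, B => .arr (C.plug B) A
def TreeCtx.plug : TreeCtx → LinTy → TreeTy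
  | .node l C r, B => .node (l ++ C.plug B :: r)
def GenCtx.plug : GenCtx → LinTy → GenTy
  | .lin C, B => .lin (C.plug B)
  | .tree C, B => .tree (C.plug B)
end

mutual
/-- Branch size of a linear type context. -/
def LinCtx.bsize (X : ℕ) : LinCtx → ℕ
  | .hole => 0
  | .arrR _ C => 1 + C.bsize X
  | .arrL C _ => C.bsize X
def TreeCtx.bsize (X : ℕ) : TreeCtx → ℕ
  | .node _ C _ => X + C.bsize X
def GenCtx.bsize (X : ℕ) : GenCtx → ℕ
  | .lin C => C.bsize X
  | .tree C => C.bsize X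
end

/-! # λ-terms (de Bruijn) and Closed Call-by-Name -/

inductive Term : Type where
  | var : ℕ → Term
  | lam : Term → Term
  | app : Term → Term → Term

/-- Shifting of free indices `≥ c` by `d`. -/
def Term.lift (d : ℕ) : ℕ → Term → Term
  | c, .var n => if n < c then .var n else .var (n + d)
  | c, .lam t => .lam (Term.lift d (c+1) t)
  | c, .app t u => .app (Term.lift d c t) (Term.lift d c u)

/-- Capture-avoiding substitution of `u` for index `k`. -/
def Term.subst (u : Term) : ℕ → Term → Term
  | k, .var n => if n = k then Term.lift k 0 u else if k < n then .var (n-1) else .var n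
  | k, .lam t => .lam (Term.subst u (k+1) t)
  | k, .app t s => .app (Term.subst u k t) (Term.subst u k s)

/-- `t{x₀ := u}`. -/
def Term.subst0 (t u : Term) : Term := Term.subst u 0 t

def Term.ClosedUnder : Term → ℕ → Prop
  | .var n, k => n < k
  | .lam t, k => t.ClosedUnder (k+1)
  | .app t u, k => t.ClosedUnder k ∧ u.ClosedUnder k

/-- Closed terms: no free variables. -/
def Term.Closed (t : Term) : Prop := t.ClosedUnder 0

/-- Occurrence of a free variable. -/
def Term.FreeIn : Term → ℕ → Prop
  | .var n, x => n = x
  | .lam t, x => t.FreeIn (x+1)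
  | .app t u, x => t.FreeIn x ∨ u.FreeIn x

/-- Weak head reduction `(λy.t)u r₁…r_h →wh t{y:=u} r₁…r_h`. -/
inductive Whr : Term → Term → Prop where
  | beta (t u : Term) : Whr (.app (.lam t) u) (t.subst0 u)
  | appL {t t' : Term} (u : Term) : Whr t t' → Whr (.app t u) (.app t' u)

/-- `n`-step weak head reduction. -/
inductive WhN : ℕ → Term → Term → Prop where
  | refl (t : Term) : WhN 0 t t
  | step {n t u v} : Whr t u → WhN n u v → WhN (n+1) t v

/-! # Type environments and the tree type system -/

/-- Type environments: maps from (de Bruijn) variables to tree types. -/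
def Env : Type := ℕ → TreeTy

def Env.empty : Env := fun _ => .node []

/-- Pointwise concatenation `Γ ⊎ Δ`. -/
def Env.union (Γ Δ : Env) : Env := fun x => (Γ x).cat (Δ x)

/-- Environment of the variable axiom: `x : [A]`. -/
def Env.single (x : ℕ) (A : LinTy) : Env :=
  fun y => if y = x then .node [.lin A] else .node []

/-- Environment extension `Γ, x₀:T` (de Bruijn cons). -/
def Env.cons (T : TreeTy) (Γ : Env) : Env
  | 0 => T
  | n+1 => Γ n

/-- Wrap a (non-empty) tree type in one extra sequence layer. -/
def TreeTy.wrap : TreeTy → TreeTy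
  | .node [] => .node []
  | T => .node [.tree T]

/-- `[Γ]`: wrap each (non-empty) type of the environment in one extra layer. -/
def Env.wrap (Γ : Env) : Env := fun x => (Γ x).wrap

/-- Finite union of environments. -/
def Env.unionF {n : ℕ} (Γs : Fin n → Env) : Env :=
  (List.ofFn Γs).foldr Env.union Env.empty

/-- Tree type derivations. -/
inductive Deriv : Env → Term → GenTy → Type where
  | var (x : ℕ) (A : LinTy) : Deriv (Env.single x A) (.var x) (.lin A)
  | lam {Γ : Env} {T : TreeTy} {t : Term} {A : LinTy} :
      Deriv (Env.cons T Γ) t (.lin A) → Deriv Γ (.lam t) (.lin (.arr T A))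
  | lamStar (t : Term) : Deriv Env.empty (.lam t) (.lin .star)
  | app {Γ Δ : Env} {t u : Term} {T : TreeTy} {A : LinTy} :
      Deriv Γ t (.lin (.arr T A)) → Deriv Δ u (.tree T) →
      Deriv (Env.union Γ Δ) (.app t u) (.lin A)
  | many {t : Term} (n : ℕ) (Γs : Fin n → Env) (Gs : Fin n → GenTy)
      (prems : ∀ i, Deriv (Γs i) t (Gs i)) :
      Deriv (Env.wrap (Env.unionF Γs)) t (.tree (.node (List.ofFn Gs)))
  | none (t : Term) : Deriv Env.empty t (.tree (.node []))

/-- Size of a derivation: number of rules that are not T-many/T-none. -/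
def Deriv.size : ∀ {Γ t G}, Deriv Γ t G → ℕ
  | _, _, _, .var _ _ => 1
  | _, _, _, .lam π => π.size + 1
  | _, _, _, .lamStar _ => 1
  | _, _, _, .app π ρ => π.size + ρ.size + 1
  | _, _, _, .many n _ _ prems => ∑ i : Fin n, (prems i).size
  | _, _, _, .none _ => 0

/-- Weight of a weighted derivation, with parameter `X`. -/
def Deriv.weight (X : ℕ) : ∀ {Γ t G}, Deriv Γ t G → ℕ
  | _, _, _, .var _ A => A.weight X
  | _, _, _, .lam (T := T) (A := A) π => max (π.weight X) (LinTy.weight X (.arr T A))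
  | _, _, _, .lamStar _ => 0
  | _, _, _, .app π ρ => max (π.weight X) (ρ.weight X)
  | _, _, _, .many n _ _ prems => X + (Finset.univ.sup fun i => (prems i).weight X)
  | _, _, _, .none _ => 0

/-- `SubD π n π'`: the judgment of `π'` occurs in `π`, crossing `n` T-many rules
descending from it to the root. -/
inductive SubD : ∀ {Γ t G}, Deriv Γ t G → ℕ → ∀ {Γ' u G'}, Deriv Γ' u G' → Prop where
  | refl {Γ t G} (π : Deriv Γ t G) : SubD π 0 π
  | lam {Γ T t A} {π : Deriv (Env.cons T Γ) t (.lin A)} {n} {Γ' u G'} {π' : Deriv Γ' u G'} :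
      SubD π n π' → SubD (Deriv.lam π) n π'
  | appL {Γ Δ t u T A} {π : Deriv Γ t (.lin (.arr T A))} {ρ : Deriv Δ u (.tree T)}
      {n} {Γ' v G'} {π' : Deriv Γ' v G'} :
      SubD π n π' → SubD (Deriv.app π ρ) n π'
  | appR {Γ Δ t u T A} {π : Deriv Γ t (.lin (.arr T A))} {ρ : Deriv Δ u (.tree T)}
      {n} {Γ' v G'} {π' : Deriv Γ' v G'} :
      SubD ρ n π' → SubD (Deriv.app π ρ) n π'
  | many {t k} {Γs : Fin k → Env} {Gs : Fin k → GenTy} {prems : ∀ i, Deriv (Γs i) t (Gs i)}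
      (i : Fin k) {n} {Γ' u G'} {π' : Deriv Γ' u G'} :
      SubD (prems i) n π' → SubD (Deriv.many k Γs Gs prems) (n+1) π'

theorem TreeTy.cat_eq_nil_iff {a b : TreeTy} :
    a.cat b = .node [] ↔ a = .node [] ∧ b = .node [] := by
  obtain ⟨as⟩ := a
  obtain ⟨bs⟩ := b
  simp [TreeTy.cat]

theorem TreeTy.wrap_eq_nil_iff {T : TreeTy} : T.wrap = .node [] ↔ T = .node [] := by
  obtain ⟨_ | ⟨g, gs⟩⟩ := T <;> simp [TreeTy.wrap]

theorem Env.union_apply_eq_nil_iff {Γ Δ : Env} {x : ℕ} :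
    Env.union Γ Δ x = .node [] ↔ Γ x = .node [] ∧ Δ x = .node [] :=
  TreeTy.cat_eq_nil_iff

theorem Env.foldr_union_apply_eq_nil_iff {L : List Env} {x : ℕ} :
    L.foldr Env.union Env.empty x = .node [] ↔ ∀ Γ ∈ L, Γ x = .node [] := by
  induction L with
  | nil => simp [Env.empty]
  | cons Γ L ih => simp [Env.union_apply_eq_nil_iff, ih]

theorem Env.unionF_apply_eq_nil_iff {n : ℕ} {Γs : Fin n → Env} {x : ℕ} :
    Env.unionF Γs x = .node [] ↔ ∀ i, Γs i x = .node [] := by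
  simp [Env.unionF, Env.foldr_union_apply_eq_nil_iff]

theorem Env.single_apply_of_ne {x y : ℕ} {A : LinTy} (h : y ≠ x) :
    Env.single x A y = .node [] := by
  simp [Env.single, h]

theorem Term.FreeIn.lt_of_closedUnder {t : Term} {k x : ℕ} (hf : t.FreeIn x)
    (hc : t.ClosedUnder k) : x < k := by
  induction t generalizing k x with
  | var n => exact (hf : n = x) ▸ hc
  | lam t ih => have := ih hf hc; omega
  | app t u iht ihu => exact hf.elim (iht · hc.1) (ihu · hc.2)

theorem Deriv.freeIn_of_ne_nil {Γ : Env} {t : Term} {G : GenTy} (π : Deriv Γ t G)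
    {x : ℕ} (hx : Γ x ≠ .node []) : t.FreeIn x := by
  induction π generalizing x with
  | var y A =>
    by_contra h
    exact hx (Env.single_apply_of_ne (Ne.symm h))
  | lam _ ih => exact ih hx
  | app _ _ ihπ ihρ =>
    rw [Ne, Env.union_apply_eq_nil_iff, not_and_or] at hx
    exact hx.imp ihπ ihρ
  | many n Γs Gs prems ih =>
    rw [Ne, Env.wrap, TreeTy.wrap_eq_nil_iff, Env.unionF_apply_eq_nil_iff, not_forall] at hx
    obtain ⟨i, hi⟩ := hx
    exact ih i hi
  | lamStar | none => exact absurd rfl hx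

/-- relevance. If `Γ ⊢ t : G` is derivable then every variable with a
non-empty tree type in `Γ` occurs free in `t`; consequently, if `t` is closed then
`Γ` assigns the empty tree type to every variable. -/
theorem relevance {Γ : Env} {t : Term} {G : GenTy} (π : Deriv Γ t G) :
    (∀ x, Γ x ≠ TreeTy.node [] → t.FreeIn x) ∧
    (t.Closed → ∀ x, Γ x = TreeTy.node []) :=
  ⟨fun _ => π.freeIn_of_ne_nil, fun hc x => by_contra fun hx =>
    Nat.not_lt_zero x ((π.freeIn_of_ne_nil hx).lt_of_closedUnder hc)⟩
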